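/- There do not exist c₂, c₅, c₆ ∈ ℂ and functions b₂, b₅, b₆, ψ₅, ψ₆ : ℂ → ℂ such that both of the following hold: (i) for all z ∈ ℂ: b₂(z)c₂ + b₅(z)c₅ + b₆(z)c₆ = φ₂(z), b₂(z)c₂² + b₅(z)c₅² + b₆(z)c₆² = 2φ₃(z), b₂(z)c₂³ + b₅(z)c₅³ + b₆(z)c₆³ = 6φ₄(z); and (ii) for all μ, ν ∈ ℂ: −c₂² b₂(μ) φ₂(c₂ν) + b₅(μ) ψ₅(ν) + b₆(μ) ψ₆(ν) = 0. -/

import Mathlib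

/-!
If `c₂ ≠ 0`, taking `ν = 2πi / c₂` in (ii) writes `b₂` as a combination of `b₅` and `b₆`, since
`φ₂(2πi) ≠ 0`; with (i) this puts `φ₂`, `φ₃`, `φ₄` in the span of the two functions `b₅`, `b₆`.
But `φ₂`, `φ₃`, `φ₄` are linearly independent: by the Taylor-remainder identity
`zᵏ φₖ(z) = eᶻ - ∑_{j<k} zʲ/j!`, on the points `z = 2πin` where `eᶻ = 1` a relation
`αφ₂ + βφ₃ + γφ₄ = 0` becomes a quadratic polynomial in `z` vanishing at `2πi`, `4πi`, `6πi`.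
-/

open Complex Submodule

/-- For `k ≥ 1`, `φ_k(z) = ∫_0^1 exp((1-θ)z) θ^(k-1)/(k-1)! dθ`; `φ_0(z) = exp z`. -/
noncomputable def phi : ℕ → ℂ → ℂ
  | 0 => fun z => Complex.exp z
  | (k + 1) => fun z =>
      ∫ θ in (0:ℝ)..1, Complex.exp ((1 - (θ : ℂ)) * z) * (θ : ℂ) ^ k / (Nat.factorial k : ℂ)

theorem LinearIndependent.card_le_two_of_mem_span_pair {K V ι : Type*} [Ring K]
    [StrongRankCondition K] [AddCommGroup V] [Module K V] [Fintype ι] {v : ι → V}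
    (hv : LinearIndependent K v) {x y : V}
    (hxy : ∀ i, v i ∈ span K {x, y}) : Fintype.card ι ≤ 2 := by
  classical
  have hle := linearIndependent_le_span_aux' v hv (({x, y} : Finset V) : Set V)
    (by rintro _ ⟨i, rfl⟩; simpa using hxy i)
  simp only [Finset.coe_sort_coe, Fintype.card_coe] at hle
  exact hle.trans Finset.card_le_two

theorem mul_phi_one (z : ℂ) : z * phi 1 z = exp z - 1 := by
  have hderiv (θ : ℝ) : HasDerivAt (fun t : ℝ => -exp ((1 - (t : ℂ)) * z))
      (z * exp ((1 - (θ : ℂ)) * z)) θ := by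
    have h : HasDerivAt (fun w : ℂ => -exp ((1 - w) * z)) (z * exp ((1 - (θ : ℂ)) * z)) θ := by
      refine (((hasDerivAt_id (θ : ℂ)).const_sub 1).mul_const z).cexp.neg.congr_deriv ?_
      simp only [id]; ring
    exact h.comp_ofReal
  have hint : IntervalIntegrable (fun θ : ℝ => z * exp ((1 - (θ : ℂ)) * z)) MeasureTheory.volume
      0 1 := by
    apply Continuous.intervalIntegrable; fun_prop
  have := intervalIntegral.integral_eq_sub_of_hasDerivAt (fun θ _ => hderiv θ) hint
  simp only [phi, pow_zero, Nat.factorial_zero, Nat.cast_one, div_one, mul_one]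
  rw [← intervalIntegral.integral_const_mul, this]
  simp only [ofReal_one, ofReal_zero, sub_self, zero_mul, exp_zero, sub_zero, one_mul]
  ring

theorem mul_phi_succ_succ (k : ℕ) (z : ℂ) :
    z * phi (k + 2) z = phi (k + 1) z - 1 / (k + 1).factorial := by
  set f : ℕ → ℝ → ℂ := fun n θ => exp ((1 - (θ : ℂ)) * z) * (θ : ℂ) ^ n / n.factorial
  have hderiv (θ : ℝ) : HasDerivAt (fun t : ℝ => -(exp ((1 - (t : ℂ)) * z) * (t : ℂ) ^ (k + 1)
      / (k + 1).factorial)) (z * f (k + 1) θ - f k θ) θ := by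
    have h : HasDerivAt (fun w : ℂ => -(exp ((1 - w) * z) * w ^ (k + 1) / (k + 1).factorial))
        (z * f (k + 1) θ - f k θ) θ := by
      refine ((((hasDerivAt_id (θ : ℂ)).const_sub 1).mul_const z).cexp.mul
        (hasDerivAt_pow (k + 1) (θ : ℂ))).div_const _ |>.neg.congr_deriv ?_
      simp only [f, id, add_tsub_cancel_right, Nat.factorial_succ, Nat.cast_mul, Nat.cast_succ]
      field_simp
      ring
    exact h.comp_ofReal
  have hint (n : ℕ) : IntervalIntegrable (f n) MeasureTheory.volume 0 1 := by
    apply Continuous.intervalIntegrable; fun_prop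
  have := intervalIntegral.integral_eq_sub_of_hasDerivAt (fun θ _ => hderiv θ)
    (((hint (k + 1)).const_mul z).sub (hint k))
  rw [intervalIntegral.integral_sub ((hint (k + 1)).const_mul z) (hint k),
    intervalIntegral.integral_const_mul] at this
  simp only [phi]
  simp only [ofReal_one, sub_self, zero_mul, exp_zero, one_pow, mul_one, one_div, ofReal_zero,
    sub_zero, ne_eq, Nat.add_eq_zero_iff, one_ne_zero, and_false, not_false_eq_true, zero_pow,
    mul_zero, zero_div, neg_zero] at this
  linear_combination this

theorem mul_phi_succ (k : ℕ) (z : ℂ) : z * phi (k + 1) z = phi k z - 1 / k.factorial := by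
  cases k with
  | zero => simpa [phi] using mul_phi_one z
  | succ k => exact mul_phi_succ_succ k z

theorem pow_mul_phi (k : ℕ) (z : ℂ) :
    z ^ k * phi k z = exp z - ∑ j ∈ Finset.range k, z ^ j / j.factorial := by
  induction k with
  | zero => simp [phi]
  | succ k ih =>
    rw [Finset.sum_range_succ, pow_succ, mul_assoc, mul_phi_succ]
    linear_combination ih

theorem linearIndependent_phi : LinearIndependent ℂ ![phi 2, phi 3, phi 4] := by
  rw [Fintype.linearIndependent_iff]
  intro g hg
  set w : ℂ := 2 * Real.pi * I
  have hw : w ≠ 0 := by simp [w, I_ne_zero]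
  have key (n : ℕ) (hn : n ≠ 0) :
      (g 0 + g 1 / 2 + g 2 / 6) * (n * w) ^ 2 + (g 1 + g 2 / 2) * (n * w) + g 2 = 0 := by
    set z : ℂ := n * w
    have hz : z ≠ 0 := mul_ne_zero (by exact_mod_cast hn) hw
    have hexp : exp z = 1 := exp_nat_mul_two_pi_mul_I n
    have h := congrFun hg z
    simp only [Finset.sum_apply, Pi.smul_apply, smul_eq_mul, Fin.sum_univ_three,
      Matrix.cons_val_zero, Matrix.cons_val_one, Matrix.cons_val, Pi.zero_apply] at h
    have h2 : z ^ 2 * phi 2 z = -z := by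
      simp only [pow_mul_phi, hexp, Finset.sum_range_succ, Finset.sum_range_zero, Nat.factorial,
        Nat.cast_succ, Nat.cast_zero]
      ring
    have h3 : z ^ 3 * phi 3 z = -z - z ^ 2 / 2 := by
      simp only [pow_mul_phi, hexp, Finset.sum_range_succ, Finset.sum_range_zero, Nat.factorial,
        Nat.cast_succ, Nat.cast_zero]
      ring
    have h4 : z ^ 4 * phi 4 z = -z - z ^ 2 / 2 - z ^ 3 / 6 := by
      simp only [pow_mul_phi, hexp, Finset.sum_range_succ, Finset.sum_range_zero, Nat.factorial,
        Nat.cast_succ, Nat.cast_zero]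
      ring
    apply mul_left_cancel₀ hz
    linear_combination (-z ^ 4) * h + g 0 * z ^ 2 * h2 + g 1 * z * h3 + g 2 * h4
  have h1 := key 1 one_ne_zero
  have h2 := key 2 two_ne_zero
  have h3 := key 3 three_ne_zero
  push_cast at h1 h2 h3
  have hc : g 2 = 0 := by linear_combination h3 - 3 * h2 + 3 * h1
  have ha : g 0 + g 1 / 2 + g 2 / 6 = 0 := by
    refine (mul_eq_zero.mp ?_).resolve_right (pow_ne_zero 2 hw)
    linear_combination (h2 - 2 * h1 + hc) / 2
  have hb : g 1 + g 2 / 2 = 0 := by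
    refine (mul_eq_zero.mp ?_).resolve_right hw
    linear_combination h1 - w ^ 2 * ha - hc
  have hb' : g 1 = 0 := by linear_combination hb - hc / 2
  have ha' : g 0 = 0 := by linear_combination ha - hb / 2 + hc / 12
  intro i
  fin_cases i <;> assumption

theorem phi_two_ne_zero_of_exp_eq_one {z : ℂ} (hz : exp z = 1) (hz₀ : z ≠ 0) : phi 2 z ≠ 0 := by
  intro h
  apply hz₀
  simpa [h, hz, Finset.sum_range_succ] using (pow_mul_phi 2 z).symm

theorem mem_span_pair_of_forall_eq {α K : Type*} [CommSemiring K] {b₂ b₅ b₆ f : α → K}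
    {a₂ a₅ a₆ : K}
    (h : ∀ z, b₂ z * a₂ + b₅ z * a₅ + b₆ z * a₆ = f z) (hb₂ : a₂ • b₂ ∈ span K {b₅, b₆}) :
    f ∈ span K {b₅, b₆} := by
  have hf : f = a₂ • b₂ + a₅ • b₅ + a₆ • b₆ := funext fun z => by
    simp only [← h z, Pi.add_apply, Pi.smul_apply, smul_eq_mul]; ring
  rw [hf]
  exact add_mem (add_mem hb₂ (smul_mem _ _ (subset_span (by simp))))
    (smul_mem _ _ (subset_span (by simp)))

theorem mem_span_pair_of_forall_mul_eq {α β K : Type*} [Field K] {b₂ b₅ b₆ : α → K}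
    {g ψ₅ ψ₆ : β → K} {ν : β} (hν : g ν ≠ 0)
    (h : ∀ μ ν, g ν * b₂ μ = b₅ μ * ψ₅ ν + b₆ μ * ψ₆ ν) : b₂ ∈ span K {b₅, b₆} := by
  refine mem_span_pair.mpr ⟨ψ₅ ν / g ν, ψ₆ ν / g ν, funext fun μ => ?_⟩
  simp only [Pi.add_apply, Pi.smul_apply, smul_eq_mul]
  field_simp
  linear_combination -h μ ν

theorem stmt_5 :
    ¬ ∃ (c₂ c₅ c₆ : ℂ) (b₂ b₅ b₆ ψ₅ ψ₆ : ℂ → ℂ),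
      (∀ z : ℂ, b₂ z * c₂ + b₅ z * c₅ + b₆ z * c₆ = phi 2 z) ∧
      (∀ z : ℂ, b₂ z * c₂ ^ 2 + b₅ z * c₅ ^ 2 + b₆ z * c₆ ^ 2 = 2 * phi 3 z) ∧
      (∀ z : ℂ, b₂ z * c₂ ^ 3 + b₅ z * c₅ ^ 3 + b₆ z * c₆ ^ 3 = 6 * phi 4 z) ∧
      (∀ mu nu : ℂ, -c₂ ^ 2 * b₂ mu * phi 2 (c₂ * nu) + b₅ mu * ψ₅ nu + b₆ mu * ψ₆ nu = 0) := by
  rintro ⟨c₂, c₅, c₆, b₂, b₅, b₆, ψ₅, ψ₆, h₁, h₂, h₃, h₄⟩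
  have hb₂ (n : ℕ) : c₂ ^ (n + 1) • b₂ ∈ span ℂ {b₅, b₆} := by
    rcases eq_or_ne c₂ 0 with rfl | hc₂
    · simp
    have hν : c₂ * (2 * Real.pi * I / c₂) = 2 * Real.pi * I := mul_div_cancel₀ _ hc₂
    refine smul_mem _ _ (mem_span_pair_of_forall_mul_eq (g := fun ν => c₂ ^ 2 * phi 2 (c₂ * ν))
      (ψ₅ := ψ₅) (ψ₆ := ψ₆) (ν := 2 * Real.pi * I / c₂) ?_ fun μ ν => by linear_combination -h₄ μ ν)
    rw [hν]
    exact mul_ne_zero (pow_ne_zero 2 hc₂)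
      (phi_two_ne_zero_of_exp_eq_one exp_two_pi_mul_I (by simp [Real.pi_ne_zero, I_ne_zero]))
  have hφ : ∀ i, ![phi 2, phi 3, phi 4] i ∈ span ℂ {b₅, b₆} := by
    have hφ₂ := mem_span_pair_of_forall_eq h₁ (by simpa using hb₂ 0)
    have hφ₃ := mem_span_pair_of_forall_eq (f := (2 : ℂ) • phi 3) h₂ (hb₂ 1)
    have hφ₄ := mem_span_pair_of_forall_eq (f := (6 : ℂ) • phi 4) h₃ (hb₂ 2)
    intro i
    fin_cases i
    exacts [hφ₂, (smul_mem_iff _ two_ne_zero).mp hφ₃, (smul_mem_iff _ (by norm_num)).mp hφ₄]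
  simpa using linearIndependent_phi.card_le_two_of_mem_span_pair hφ
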